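/- arXiv:2208.12558 — 4 statements merged into one kernel-verified Lean document; each statement's English description precedes it below -/
import Mathlib

section
/- Let S₁, …, S_k (k ≥ 1) be finite nonempty subsets of ℤ, each symmetric (i.e., x ∈ S_i implies −x ∈ S_i). If their Minkowski sum S₁ + ⋯ + S_k equals {−2, −1, 1, 2}, then there is exactly one index j with S_j = {−2, −1, 1, 2}, and S_i = {0} for every i ≠ j. -/
open Pointwise BigOperators

lemma mem_sum_iff' {k : ℕ} (S : Fin k → Finset ℤ) (x : ℤ) :
    x ∈ ∑ i, S i ↔ ∃ g : Fin k → ℤ, (∀ i, g i ∈ S i) ∧ ∑ i, g i = x := by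
  rw [← Finset.mem_coe, Finset.coe_sum]
  rw [Set.mem_fintype_sum]
  constructor
  · rintro ⟨g, hg, rfl⟩; exact ⟨g, fun i => hg i, rfl⟩
  · rintro ⟨g, hg, rfl⟩; exact ⟨g, fun i => hg i, rfl⟩


/-- If finite nonempty symmetric sets of integers have Minkowski sum `{-2,-1,1,2}`,
then exactly one of them equals `{-2,-1,1,2}` and all the others equal `{0}`. -/
theorem stmt2 (k : ℕ) (hk : 1 ≤ k) (S : Fin k → Finset ℤ)
    (hne : ∀ i, (S i).Nonempty)
    (hsym : ∀ i, ∀ x ∈ S i, -x ∈ S i)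
    (hsum : (∑ i, S i) = ({-2, -1, 1, 2} : Finset ℤ)) :
    ∃! j : Fin k, S j = ({-2, -1, 1, 2} : Finset ℤ) ∧
      ∀ i : Fin k, i ≠ j → S i = ({0} : Finset ℤ) := by
  classical
  set M : Fin k → ℤ := fun i => (S i).max' (hne i) with hMdef
  have hMmem : ∀ i, M i ∈ S i := fun i => Finset.max'_mem _ _
  have hMle : ∀ i, ∀ a ∈ S i, a ≤ M i := fun i a ha => Finset.le_max' _ _ ha
  have hM0 : ∀ i, 0 ≤ M i := fun i => by
    have h1 := hsym i (M i) (hMmem i)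
    have h2 := hMle i _ h1
    linarith
  have hMsum_mem : (∑ i, M i) ∈ ({-2, -1, 1, 2} : Finset ℤ) := by
    rw [← hsum, mem_sum_iff']; exact ⟨M, hMmem, rfl⟩
  have h2mem : (2:ℤ) ∈ ∑ i, S i := by rw [hsum]; decide
  obtain ⟨g, hg, hgsum⟩ := (mem_sum_iff' S 2).1 h2mem
  have hsum2 : ∑ i, M i = 2 := by
    have hle : (2:ℤ) ≤ ∑ i, M i := by
      rw [← hgsum]; exact Finset.sum_le_sum (fun i _ => hMle i _ (hg i))
    simp only [Finset.mem_insert, Finset.mem_singleton] at hMsum_mem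
    rcases hMsum_mem with h | h | h | h <;> omega
  have hflip : ∀ j : Fin k, 2 - 2 * M j ∈ ({-2, -1, 1, 2} : Finset ℤ) := by
    intro j
    rw [← hsum, mem_sum_iff']
    refine ⟨fun i => if i = j then -M j else M i, fun i => ?_, ?_⟩
    · by_cases h : i = j
      · subst h; simp only [if_pos rfl]; exact hsym i _ (hMmem i)
      · simp only [if_neg h]; exact hMmem i
    · have : ∀ i : Fin k, (if i = j then -M j else M i) = M i + (if i = j then -2 * M j else 0) := by
        intro i; by_cases h : i = j
        · subst h; simp; ring
        · simp [h]
      rw [Finset.sum_congr rfl (fun i _ => this i), Finset.sum_add_distrib,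
        Finset.sum_ite_eq' Finset.univ j (fun _ => -2 * M j)]
      simp [hsum2]; ring
  have hno1 : ∀ j, M j ≠ 1 := by
    intro j h
    have := hflip j
    rw [h] at this
    norm_num at this
  obtain ⟨j, hj⟩ : ∃ j, 1 ≤ M j := by
    by_contra h
    push_neg at h
    have : ∀ i, M i = 0 := fun i => by have := h i; have := hM0 i; omega
    rw [Finset.sum_congr rfl (fun i _ => this i)] at hsum2
    simp at hsum2
  have hMj2 : M j = 2 := by
    have h1 : M j ≤ 2 := by
      rw [← hsum2]
      exact Finset.single_le_sum (fun i _ => hM0 i) (Finset.mem_univ j)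
    have := hno1 j
    omega
  have hMi0 : ∀ i, i ≠ j → M i = 0 := by
    intro i hij
    by_contra h
    have h1 : 1 ≤ M i := by have := hM0 i; omega
    have h2 : M i + M j ≤ ∑ l, M l := by
      have := Finset.add_sum_erase Finset.univ M (Finset.mem_univ i)
      rw [← this]
      have hjmem : j ∈ Finset.univ.erase i := Finset.mem_erase.2 ⟨fun h => hij h.symm, Finset.mem_univ j⟩
      have := Finset.single_le_sum (f := M) (fun l _ => hM0 l) hjmem
      omega
    omega
  have hSi0 : ∀ i, i ≠ j → S i = ({0} : Finset ℤ) := by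
    intro i hij
    ext a
    simp only [Finset.mem_singleton]
    constructor
    · intro ha
      have h1 := hMle i a ha
      have h2 := hMle i _ (hsym i a ha)
      rw [hMi0 i hij] at h1 h2
      omega
    · rintro rfl
      have := hMmem i
      rwa [hMi0 i hij] at this
  have hSj : S j = ({-2, -1, 1, 2} : Finset ℤ) := by
    ext x
    rw [← hsum, mem_sum_iff']
    constructor
    · intro hx
      refine ⟨fun i => if i = j then x else 0, fun i => ?_, ?_⟩
      · by_cases h : i = j
        · subst h; simpa using hx
        · rw [hSi0 i h]; simp [h]
      · rw [Finset.sum_ite_eq' Finset.univ j (fun _ => x)]; simp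
    · rintro ⟨g', hg', rfl⟩
      have hz : ∀ i, i ≠ j → g' i = 0 := by
        intro i hij
        have := hg' i
        rw [hSi0 i hij] at this
        simpa using this
      rw [Finset.sum_eq_single j (fun i _ h => hz i h) (fun h => absurd (Finset.mem_univ j) h)]
      exact hg' j
  refine ⟨j, ⟨hSj, hSi0⟩, ?_⟩
  rintro y ⟨hy1, _⟩
  by_contra hyj
  have := hSi0 y hyj
  rw [hy1] at this
  have : (2:ℤ) ∈ ({0} : Finset ℤ) := this ▸ (by decide)
  simp at this
end

section
/- Let S ⊆ ℕ be a finite nonempty set with maximum M, satisfying: (a) if 2 ∈ S then 0 ∈ S or 1 ∈ S; (b) for every σ ∈ S with σ > 2, also σ − 2 ∈ S; (c) if 4 ∈ S then 0 ∈ S; (d) if M > 2 and S contains both an even and an odd element, then S = {0, 1, …, M}. Then S is one of the following six sets: {0}; {1}; {1, 2}; {0, 1, …, M}; {x : 0 ≤ x ≤ M, x even} with M even; {x : 1 ≤ x ≤ M, x odd} with M odd. -/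
/-- Classification of non-negative rectilinear spirality sets: a finite nonempty
`S ⊆ ℕ` with maximum `M` satisfying the closure properties (a)–(d) is one of the six
structures `[0]`, `[1]`, `[1,2]¹`, `[0,M]¹`, `[0,M]²`, `[1,M]²`. -/
theorem stmt7 (S : Finset ℕ) (hne : S.Nonempty)
    (ha : 2 ∈ S → 0 ∈ S ∨ 1 ∈ S)
    (hb : ∀ σ ∈ S, σ > 2 → σ - 2 ∈ S)
    (hc : 4 ∈ S → 0 ∈ S)
    (hd : S.max' hne > 2 → (∃ x ∈ S, Even x) → (∃ x ∈ S, Odd x) →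
      S = Finset.Icc 0 (S.max' hne)) :
    S = {0} ∨ S = {1} ∨ S = ({1, 2} : Finset ℕ) ∨
    S = Finset.Icc 0 (S.max' hne) ∨
    (Even (S.max' hne) ∧ S = (Finset.Icc 0 (S.max' hne)).filter (fun x => Even x)) ∨
    (Odd (S.max' hne) ∧ S = (Finset.Icc 1 (S.max' hne)).filter (fun x => Odd x)) := by
  set M := S.max' hne with hMdef
  have hMmem : M ∈ S := S.max'_mem hne
  have hle : ∀ x ∈ S, x ≤ M := fun x hx => S.le_max' x hx
  have down : ∀ k m, 1 ≤ m → m + 2 * k ∈ S → m ∈ S := by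
    intro k
    induction k with
    | zero => intro m _ h; simpa using h
    | succ k ih =>
      intro m hm h
      apply ih m hm
      have h2 := hb _ h (by omega)
      have he : m + 2 * (k + 1) - 2 = m + 2 * k := by omega
      rwa [he] at h2
  have downle : ∀ m, 1 ≤ m → m ≤ M → Even (M - m) → m ∈ S := by
    intro m hm hmM hE
    obtain ⟨k, hk⟩ := hE
    exact down k m hm (by rw [show m + 2 * k = M by omega]; exact hMmem)
  by_cases hodd : ∃ x ∈ S, Odd x
  · by_cases heven : ∃ x ∈ S, Even x
    · -- mixed case
      by_cases hM2 : M > 2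
      · exact Or.inr (Or.inr (Or.inr (Or.inl (hd hM2 heven hodd))))
      · obtain ⟨e, heS, heO⟩ := hodd
        have he1 : e = 1 := by
          have := hle e heS
          obtain ⟨b, hb'⟩ := heO
          omega
        have h1 : 1 ∈ S := he1 ▸ heS
        have hM1 : 1 ≤ M := hle 1 h1
        rcases (show M = 1 ∨ M = 2 by omega) with h | h
        · -- S = Icc 0 1
          obtain ⟨f, hfS, hfE⟩ := heven
          have hf0 : f = 0 := by
            have := hle f hfS
            obtain ⟨b, hb'⟩ := hfE
            omega
          have h0 : 0 ∈ S := hf0 ▸ hfS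
          refine Or.inr (Or.inr (Or.inr (Or.inl ?_)))
          ext x
          simp only [Finset.mem_Icc, ← hMdef, h]
          constructor
          · intro hx; exact ⟨Nat.zero_le _, h ▸ hle x hx⟩
          · rintro ⟨-, hx⟩
            interval_cases x
            · exact h0
            · exact h1
        · -- M = 2
          have h2S : 2 ∈ S := h ▸ hMmem
          by_cases h0 : 0 ∈ S
          · refine Or.inr (Or.inr (Or.inr (Or.inl ?_)))
            ext x
            simp only [Finset.mem_Icc, ← hMdef, h]
            constructor
            · intro hx; exact ⟨Nat.zero_le _, h ▸ hle x hx⟩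
            · rintro ⟨-, hx⟩
              interval_cases x
              · exact h0
              · exact h1
              · exact h2S
          · refine Or.inr (Or.inr (Or.inl ?_))
            ext x
            simp only [Finset.mem_insert, Finset.mem_singleton]
            constructor
            · intro hx
              have hx2 : x ≤ 2 := h ▸ hle x hx
              have hx0 : x ≠ 0 := fun hh => h0 (hh ▸ hx)
              omega
            · rintro (rfl | rfl)
              · exact h1
              · exact h2S
    · -- all odd
      have allO : ∀ x ∈ S, Odd x := fun x hx =>
        (Nat.even_or_odd x).resolve_left (fun h => heven ⟨x, hx, h⟩)
      have hMO : Odd M := allO M hMmem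
      refine Or.inr (Or.inr (Or.inr (Or.inr (Or.inr ⟨hMO, ?_⟩))))
      ext x
      simp only [Finset.mem_filter, Finset.mem_Icc, ← hMdef]
      constructor
      · intro hx
        have hxO := allO x hx
        obtain ⟨b, hb'⟩ := hxO
        exact ⟨⟨by omega, hle x hx⟩, allO x hx⟩
      · rintro ⟨⟨hx1, hxM⟩, hxO⟩
        obtain ⟨a, ha'⟩ := hMO
        obtain ⟨b, hb'⟩ := hxO
        exact downle x hx1 hxM ⟨a - b, by omega⟩
  · -- all even
    have allE : ∀ x ∈ S, Even x := fun x hx =>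
      (Nat.even_or_odd x).resolve_right (fun h => hodd ⟨x, hx, h⟩)
    have hME : Even M := allE M hMmem
    by_cases hM0 : M = 0
    · refine Or.inl ?_
      ext x
      simp only [Finset.mem_singleton]
      constructor
      · intro hx; have := hle x hx; omega
      · rintro rfl; exact hM0 ▸ hMmem
    · have hM2 : 2 ≤ M := by obtain ⟨a, ha'⟩ := hME; omega
      have h2S : 2 ∈ S := by
        refine downle 2 one_le_two hM2 ?_
        obtain ⟨a, ha'⟩ := hME
        exact ⟨a - 1, by omega⟩
      have h0S : 0 ∈ S := by
        by_cases hM4 : 4 ≤ M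
        · refine hc (downle 4 (by omega) hM4 ?_)
          obtain ⟨a, ha'⟩ := hME
          exact ⟨a - 2, by omega⟩
        · rcases ha h2S with h | h
          · exact h
          · exact absurd ⟨1, h, odd_one⟩ hodd
      refine Or.inr (Or.inr (Or.inr (Or.inr (Or.inl ⟨hME, ?_⟩))))
      ext x
      simp only [Finset.mem_filter, Finset.mem_Icc, ← hMdef]
      constructor
      · intro hx
        exact ⟨⟨Nat.zero_le _, hle x hx⟩, allE x hx⟩
      · rintro ⟨⟨-, hxM⟩, hxE⟩
        rcases Nat.eq_zero_or_pos x with rfl | hx1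
        · exact h0S
        · obtain ⟨a, ha'⟩ := hME
          obtain ⟨b, hb'⟩ := hxE
          exact downle x hx1 hxM ⟨a - b, by omega⟩
end

section
/- Let N be an even natural number and let F : ℕ → Set ℤ be a family of sets such that (i) for every k ≥ 1 and every x ∈ F(k), both x + 2 ∈ F(k−1) and x − 2 ∈ F(k−1), and (ii) F(0) ⊆ {x ∈ ℤ : |x| ≤ N + 2}. Then F(N/2 + 1) ⊆ {0}. -/
/-- If `F : ℕ → Set ℤ` satisfies that every `x ∈ F k` (`k ≥ 1`) has both `x + 2` and
`x - 2` in `F (k-1)`, and `F 0 ⊆ {x : |x| ≤ N + 2}` for an even `N`, then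
`F (N/2 + 1) ⊆ {0}`. -/
theorem stmt12 (N : ℕ) (hN : Even N) (F : ℕ → Set ℤ)
    (h1 : ∀ k : ℕ, 1 ≤ k → ∀ x ∈ F k, x + 2 ∈ F (k - 1) ∧ x - 2 ∈ F (k - 1))
    (h2 : F 0 ⊆ {x : ℤ | |x| ≤ (N : ℤ) + 2}) :
    F (N / 2 + 1) ⊆ {0} := by
  have aux : ∀ k : ℕ, ∀ x ∈ F k, x + 2 * k ∈ F 0 ∧ x - 2 * k ∈ F 0 := by
    intro k
    induction k with
    | zero => intro x hx; simpa using hx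
    | succ n ih =>
      intro x hx
      obtain ⟨hp, hm⟩ := h1 (n + 1) (Nat.le_add_left 1 n) x hx
      simp only [Nat.add_sub_cancel] at hp hm
      have h1' := (ih _ hp).1
      have h2' := (ih _ hm).2
      constructor
      · have : x + 2 * (↑(n + 1) : ℤ) = x + 2 + 2 * n := by push_cast; ring
        rwa [this]
      · have : x - 2 * (↑(n + 1) : ℤ) = x - 2 - 2 * n := by push_cast; ring
        rwa [this]
  intro x hx
  obtain ⟨hp, hm⟩ := aux _ x hx
  have hp' := h2 hp
  have hm' := h2 hm
  simp only [Set.mem_setOf_eq] at hp' hm'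
  have hk : (↑(N / 2 + 1) : ℤ) * 2 = (N : ℤ) + 2 := by
    obtain ⟨m, rfl⟩ := hN
    have : (m + m) / 2 = m := by omega
    rw [this]; push_cast; ring
  simp only [Set.mem_singleton_iff]
  rw [abs_le] at hp' hm'
  omega
end

section
/- Let S₁, S₂, S₃ be finite nonempty symmetric subsets of ℤ whose non-negative parts each equal one of the six structures {0}, {1}, {1,2}, {0,…,M}, {x ≤ M : x even} (M even), {x : 1 ≤ x ≤ M, x odd} (M odd), and assume max S₁ ≥ max S₂ ≥ max S₃. Suppose there exist an integer σ > 4 and a permutation π of {1,2,3} such that σ + 2 ∈ S_{π(1)}, σ ∈ S_{π(2)}, and σ − 2 ∈ S_{π(3)}. Then also σ + 2 ∈ S₁, σ ∈ S₂, and σ − 2 ∈ S₃. -/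
open Pointwise

/-- The six possible structures of a non-negative rectilinear spirality set,
as a finite set of integers. -/
def SixStruct (P : Finset ℤ) : Prop :=
  P = {0} ∨ P = {1} ∨ P = ({1, 2} : Finset ℤ) ∨
  (∃ M : ℕ, P = Finset.Icc (0 : ℤ) M) ∨
  (∃ M : ℕ, Even M ∧ P = (Finset.Icc (0 : ℤ) M).filter (fun x => Even x)) ∨
  (∃ M : ℕ, Odd M ∧ P = (Finset.Icc (1 : ℤ) M).filter (fun x => Odd x))

lemma six_key (S : Finset ℤ) (hne : S.Nonempty)
    (hstruct : SixStruct (S.filter (fun x => 0 ≤ x)))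
    (c x : ℤ) (hc : c ∈ S) (hc2 : 2 < c) (hx2 : 2 < x) (hpar : Even (x - c))
    (hxm : x ≤ S.max' hne) : x ∈ S := by
  have hcP : c ∈ S.filter (fun x => 0 ≤ x) := Finset.mem_filter.mpr ⟨hc, by omega⟩
  have hmP : S.max' hne ∈ S.filter (fun x => 0 ≤ x) :=
    Finset.mem_filter.mpr ⟨S.max'_mem hne, le_trans (by omega) (Finset.le_max' S c hc)⟩
  rcases hstruct with h | h | h | ⟨M, h⟩ | ⟨M, hM, h⟩ | ⟨M, hM, h⟩
  · rw [h] at hcP; simp at hcP; omega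
  · rw [h] at hcP; simp at hcP; omega
  · rw [h] at hcP; simp at hcP; omega
  · rw [h] at hmP
    rw [Finset.mem_Icc] at hmP
    have : x ∈ S.filter (fun x => 0 ≤ x) := by
      rw [h, Finset.mem_Icc]; omega
    exact (Finset.mem_filter.mp this).1
  · rw [h] at hcP hmP
    rw [Finset.mem_filter, Finset.mem_Icc] at hcP hmP
    obtain ⟨r, hr⟩ := hpar
    obtain ⟨s, hs⟩ := hcP.2
    have hxe : Even x := ⟨r + s, by omega⟩
    have : x ∈ S.filter (fun x => 0 ≤ x) := by
      rw [h, Finset.mem_filter, Finset.mem_Icc]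
      exact ⟨⟨by omega, by omega⟩, hxe⟩
    exact (Finset.mem_filter.mp this).1
  · rw [h] at hcP hmP
    rw [Finset.mem_filter, Finset.mem_Icc] at hcP hmP
    obtain ⟨r, hr⟩ := hpar
    obtain ⟨s, hs⟩ := hcP.2
    have hxe : Odd x := ⟨r + s, by omega⟩
    have : x ∈ S.filter (fun x => 0 ≤ x) := by
      rw [h, Finset.mem_filter, Finset.mem_Icc]
      exact ⟨⟨by omega, by omega⟩, hxe⟩
    exact (Finset.mem_filter.mp this).1

/-- For three finite nonempty symmetric sets of integers with the six-structure
non-negative parts, sorted by decreasing maximum: if for some permutation of the three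
sets and some `σ > 4` we have `σ + 2`, `σ`, `σ - 2` in the permuted sets respectively,
then already `σ + 2 ∈ S 0`, `σ ∈ S 1`, and `σ - 2 ∈ S 2`. -/
theorem stmt15 (S : Fin 3 → Finset ℤ)
    (hne : ∀ i, (S i).Nonempty)
    (hsym : ∀ i, ∀ x ∈ S i, -x ∈ S i)
    (hstruct : ∀ i, SixStruct ((S i).filter (fun x => 0 ≤ x)))
    (hsorted : (S 1).max' (hne 1) ≤ (S 0).max' (hne 0) ∧
      (S 2).max' (hne 2) ≤ (S 1).max' (hne 1))
    (σ : ℤ) (hσ : σ > 4)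
    (hperm : ∃ π : Equiv.Perm (Fin 3),
      σ + 2 ∈ S (π 0) ∧ σ ∈ S (π 1) ∧ σ - 2 ∈ S (π 2)) :
    σ + 2 ∈ S 0 ∧ σ ∈ S 1 ∧ σ - 2 ∈ S 2 := by
  obtain ⟨π, ha, hb, hc⟩ := hperm
  have h3 : ∀ j : Fin 3, j = 0 ∨ j = 1 ∨ j = 2 := by decide
  -- σ - 2 belongs to each of the three sets
  have k0 : σ - 2 ∈ S (π 0) :=
    six_key _ (hne _) (hstruct _) (σ + 2) (σ - 2) ha (by omega) (by omega)
      ⟨-2, by ring⟩ (le_trans (by omega) (Finset.le_max' _ _ ha))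
  have k1 : σ - 2 ∈ S (π 1) :=
    six_key _ (hne _) (hstruct _) σ (σ - 2) hb (by omega) (by omega)
      ⟨-1, by ring⟩ (le_trans (by omega) (Finset.le_max' _ _ hb))
  have hall : ∀ j, σ - 2 ∈ S j := by
    intro j
    rcases h3 (π.symm j) with h | h | h <;>
      [ (rw [← π.apply_symm_apply j, h]; exact k0);
        (rw [← π.apply_symm_apply j, h]; exact k1);
        (rw [← π.apply_symm_apply j, h]; exact hc) ]
  set m : Fin 3 → ℤ := fun i => (S i).max' (hne i) with hm
  have M0 : σ + 2 ≤ m (π 0) := Finset.le_max' _ _ ha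
  have M1 : σ ≤ m (π 1) := Finset.le_max' _ _ hb
  have hs1 : m 1 ≤ m 0 := hsorted.1
  have hs2 : m 2 ≤ m 1 := hsorted.2
  have B0 : σ + 2 ≤ m 0 := by
    rcases h3 (π 0) with h | h | h <;> rw [h] at M0 <;> omega
  have B2 : σ - 2 ≤ m 2 := Finset.le_max' _ _ (hall 2)
  have B1 : σ ≤ m 1 := by
    rcases h3 (π 1) with h1 | h1 | h1
    · rcases h3 (π 0) with h0 | h0 | h0
      · exact absurd (π.injective (h0.trans h1.symm)) (by decide)
      · rw [h0] at M0; omega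
      · rw [h0] at M0; omega
    · rw [h1] at M1; omega
    · rw [h1] at M1; omega
  refine ⟨?_, ?_, hall 2⟩
  · exact six_key _ (hne 0) (hstruct 0) (σ - 2) (σ + 2) (hall 0) (by omega) (by omega)
      ⟨2, by ring⟩ B0
  · exact six_key _ (hne 1) (hstruct 1) (σ - 2) σ (hall 1) (by omega) (by omega)
      ⟨1, by ring⟩ B1
end
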